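/- arXiv:2404.12688 — 4 statements merged into one kernel-verified Lean document; each statement's English description precedes it below -/
import Mathlib

section
/- Let (Θ, P) be a probability space and (D, ν) a σ-finite measure space, and let G : Θ × D → ℝ be measurable and square-integrable on Θ × D with covariance kernel k(x,y) = ∫_Θ G(θ,x) G(θ,y) dP(θ). Suppose u_i, u_j ∈ L²(D, ν) are orthonormal eigenfunctions of the kernel, i.e., ∫_D k(x,y) u_i(y) dν(y) = λ_i u_i(x) for ν-a.e. x and similarly for u_j, with λ_i, λ_j > 0, and ∫_D u_i u_j dν = δ_{ij}, ∫_D u_i² dν = ∫_D u_j² dν = 1. Define the Karhunen–Loève coordinates η_i(θ) = λ_i^{-1/2} ∫_D G(θ,x) u_i(x) dν(x) and η_j likewise. Then ∫_Θ η_i(θ) η_j(θ) dP(θ) = δ_{ij}: the KL coordinates are uncorrelated with unit variance. -/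
/-!
Fubini turns `∫ ⟨G θ, u i⟩ ⟨G θ, u j⟩ dP(θ)` into `⟨u i, K (u j)⟩ = lam j ⟨u i, u j⟩`, where `K` is
the covariance operator. The interchange is justified because, by Cauchy–Schwarz in `x` for each
fixed `θ`, the integrand on `Θ × D × D` has `L¹` norm at most `‖u i‖₂ ‖u j‖₂ ∫ ‖G θ‖₂² dP`.
-/

open MeasureTheory

section Covariance

variable {Θ D : Type*} [MeasurableSpace Θ] [MeasurableSpace D] {P : Measure Θ} {ν : Measure D}
  {G : Θ → D → ℝ}

theorem lintegral_enorm_mul_le_eLpNorm_two_mul {φ ψ : D → ℝ} (hφ : AEStronglyMeasurable φ ν)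
    (hψ : AEStronglyMeasurable ψ ν) :
    ∫⁻ x, ‖φ x * ψ x‖ₑ ∂ν ≤ eLpNorm φ 2 ν * eLpNorm ψ 2 ν := by
  have h := eLpNorm_smul_le_mul_eLpNorm (p := 2) (q := 2) (r := 1) hψ hφ
  rwa [eLpNorm_one_eq_lintegral_enorm] at h

theorem eLpNorm_two_sq_eq_lintegral_ofReal_sq (φ : D → ℝ) :
    eLpNorm φ 2 ν ^ 2 = ∫⁻ x, ENNReal.ofReal (φ x ^ 2) ∂ν := by
  have h := eLpNorm_nnreal_pow_eq_lintegral (f := φ) (μ := ν) (p := 2) two_ne_zero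
  simp only [ENNReal.coe_ofNat, NNReal.coe_ofNat, ENNReal.rpow_ofNat] at h
  rw [h]
  refine lintegral_congr fun x => ?_
  rw [← ofReal_norm, ← ENNReal.ofReal_pow (norm_nonneg _), Real.norm_eq_abs, sq_abs]

theorem integrable_field_mul_field_prod [SFinite P] [SFinite ν]
    (hG : Measurable (Function.uncurry G))
    (hL2 : ∫⁻ θ, ∫⁻ x, ENNReal.ofReal ((G θ x) ^ 2) ∂ν ∂P < ⊤)
    {f g : D → ℝ} (hf : MemLp f 2 ν) (hg : MemLp g 2 ν) :
    Integrable (fun p : Θ × D × D => G p.1 p.2.1 * f p.2.1 * (G p.1 p.2.2 * g p.2.2))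
      (P.prod (ν.prod ν)) := by
  have hGθ (θ : Θ) : AEStronglyMeasurable (G θ) ν := hG.of_uncurry_left.aestronglyMeasurable
  have hmeas : AEStronglyMeasurable
      (fun p : Θ × D × D => G p.1 p.2.1 * f p.2.1 * (G p.1 p.2.2 * g p.2.2))
      (P.prod (ν.prod ν)) := by
    have hG₁ : Measurable fun p : Θ × D × D => G p.1 p.2.1 :=
      hG.comp (measurable_fst.prodMk measurable_snd.fst)
    have hG₂ : Measurable fun p : Θ × D × D => G p.1 p.2.2 :=
      hG.comp (measurable_fst.prodMk measurable_snd.snd)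
    exact (hG₁.aestronglyMeasurable.mul ((hf.1.comp_fst (ν := ν)).comp_snd (μ := P))).mul
      (hG₂.aestronglyMeasurable.mul ((hg.1.comp_snd (μ := ν)).comp_snd (μ := P)))
  refine ⟨hmeas, ?_⟩
  rw [hasFiniteIntegral_def, lintegral_prod _ hmeas.enorm]
  calc ∫⁻ θ, ∫⁻ z, ‖G θ z.1 * f z.1 * (G θ z.2 * g z.2)‖ₑ ∂ν.prod ν ∂P
      = ∫⁻ θ, (∫⁻ x, ‖G θ x * f x‖ₑ ∂ν) * ∫⁻ y, ‖G θ y * g y‖ₑ ∂ν ∂P := by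
        refine lintegral_congr fun θ => ?_
        rw [← lintegral_prod_mul (f := fun x => ‖G θ x * f x‖ₑ) (g := fun y => ‖G θ y * g y‖ₑ)
          ((hGθ θ).mul hf.1).enorm ((hGθ θ).mul hg.1).enorm]
        simp only [enorm_mul]
    _ ≤ ∫⁻ θ, eLpNorm (G θ) 2 ν ^ 2 * (eLpNorm f 2 ν * eLpNorm g 2 ν) ∂P := by
        refine lintegral_mono fun θ => ?_
        calc (∫⁻ x, ‖G θ x * f x‖ₑ ∂ν) * ∫⁻ y, ‖G θ y * g y‖ₑ ∂ν
            ≤ (eLpNorm (G θ) 2 ν * eLpNorm f 2 ν) * (eLpNorm (G θ) 2 ν * eLpNorm g 2 ν) :=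
              mul_le_mul' (lintegral_enorm_mul_le_eLpNorm_two_mul (hGθ θ) hf.1)
                (lintegral_enorm_mul_le_eLpNorm_two_mul (hGθ θ) hg.1)
          _ = eLpNorm (G θ) 2 ν ^ 2 * (eLpNorm f 2 ν * eLpNorm g 2 ν) := by ring
    _ = (∫⁻ θ, ∫⁻ x, ENNReal.ofReal ((G θ x) ^ 2) ∂ν ∂P) * (eLpNorm f 2 ν * eLpNorm g 2 ν) := by
        rw [lintegral_mul_const' _ _ (ENNReal.mul_ne_top hf.2.ne hg.2.ne)]
        simp only [eLpNorm_two_sq_eq_lintegral_ofReal_sq]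
    _ < ⊤ := ENNReal.mul_lt_top hL2 (ENNReal.mul_lt_top hf.2 hg.2)

theorem integral_mul_integral_eq_integral_covariance [SFinite P] [SFinite ν]
    (hG : Measurable (Function.uncurry G))
    (hL2 : ∫⁻ θ, ∫⁻ x, ENNReal.ofReal ((G θ x) ^ 2) ∂ν ∂P < ⊤)
    {f g : D → ℝ} (hf : MemLp f 2 ν) (hg : MemLp g 2 ν) :
    ∫ θ, (∫ x, G θ x * f x ∂ν) * (∫ y, G θ y * g y ∂ν) ∂P =
      ∫ x, f x * ∫ y, (∫ θ, G θ x * G θ y ∂P) * g y ∂ν ∂ν := by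
  have hint := integrable_field_mul_field_prod hG hL2 hf hg
  calc ∫ θ, (∫ x, G θ x * f x ∂ν) * (∫ y, G θ y * g y ∂ν) ∂P
      = ∫ θ, ∫ z : D × D, G θ z.1 * f z.1 * (G θ z.2 * g z.2) ∂ν.prod ν ∂P :=
        integral_congr_ae (.of_forall fun θ => (integral_prod_mul _ _).symm)
    _ = ∫ z : D × D, ∫ θ, G θ z.1 * f z.1 * (G θ z.2 * g z.2) ∂P ∂ν.prod ν :=
        integral_integral_swap hint
    _ = ∫ x, ∫ y, ∫ θ, G θ x * f x * (G θ y * g y) ∂P ∂ν ∂ν :=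
        integral_prod _ hint.integral_prod_right
    _ = ∫ x, f x * ∫ y, (∫ θ, G θ x * G θ y ∂P) * g y ∂ν ∂ν := by
        refine integral_congr_ae (.of_forall fun x => ?_)
        dsimp only
        rw [← integral_const_mul]
        refine integral_congr_ae (.of_forall fun y => ?_)
        dsimp only
        rw [← integral_mul_const, ← integral_const_mul]
        exact integral_congr_ae (.of_forall fun θ => by ring)

end Covariance

theorem stmt_1_general {Θ D ι : Type*} [MeasurableSpace Θ] [MeasurableSpace D] [DecidableEq ι]
    (P : Measure Θ) [IsProbabilityMeasure P] (ν : Measure D) [SigmaFinite ν]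
    (G : Θ → D → ℝ) (hG : Measurable (Function.uncurry G))
    (hL2 : ∫⁻ θ, ∫⁻ x, ENNReal.ofReal ((G θ x) ^ 2) ∂ν ∂P < ⊤)
    (u : ι → D → ℝ) (lam : ι → ℝ) (i j : ι)
    (hu : ∀ m, m = i ∨ m = j → MemLp (u m) 2 ν)
    (hlami : 0 < lam i)
    (heig : ∀ m, m = i ∨ m = j → ∀ᵐ x ∂ν,
      ∫ y, (∫ θ, G θ x * G θ y ∂P) * u m y ∂ν = lam m * u m x)
    (horth : ∀ m n, (m = i ∨ m = j) → (n = i ∨ n = j) →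
      ∫ x, u m x * u n x ∂ν = if m = n then 1 else 0) :
    ∫ θ, ((Real.sqrt (lam i))⁻¹ * ∫ x, G θ x * u i x ∂ν) *
        ((Real.sqrt (lam j))⁻¹ * ∫ x, G θ x * u j x ∂ν) ∂P =
      if i = j then 1 else 0 := by
  have hcov := integral_mul_integral_eq_integral_covariance hG hL2
    (hu i (Or.inl rfl)) (hu j (Or.inr rfl))
  have heigen : ∫ x, u i x * ∫ y, (∫ θ, G θ x * G θ y ∂P) * u j y ∂ν ∂ν =
      lam j * if i = j then 1 else 0 := by
    rw [← horth i j (Or.inl rfl) (Or.inr rfl), ← integral_const_mul]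
    refine integral_congr_ae ?_
    filter_upwards [heig j (Or.inr rfl)] with x hx
    rw [hx]
    ring
  simp_rw [mul_mul_mul_comm _ (∫ x, G _ x * u i x ∂ν)]
  rw [integral_const_mul, hcov, heigen]
  split_ifs with hij
  · subst hij
    rw [mul_one, ← mul_inv, Real.mul_self_sqrt hlami.le, inv_mul_cancel₀ hlami.ne']
  · simp

/-- Karhunen–Loève coordinates on orthonormal eigenfunctions of the
covariance kernel are uncorrelated with unit variance. -/
theorem stmt_1 {Θ D ι : Type*} [MeasurableSpace Θ] [MeasurableSpace D] [DecidableEq ι]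
    (P : Measure Θ) [IsProbabilityMeasure P] (ν : Measure D) [SigmaFinite ν]
    (G : Θ → D → ℝ) (hG : Measurable (Function.uncurry G))
    (hL2 : ∫⁻ θ, ∫⁻ x, ENNReal.ofReal ((G θ x) ^ 2) ∂ν ∂P < ⊤)
    (u : ι → D → ℝ) (lam : ι → ℝ) (i j : ι)
    (hu : ∀ m, m = i ∨ m = j → MemLp (u m) 2 ν)
    (hlami : 0 < lam i) (hlamj : 0 < lam j)
    (heig : ∀ m, m = i ∨ m = j → ∀ᵐ x ∂ν,
      ∫ y, (∫ θ, G θ x * G θ y ∂P) * u m y ∂ν = lam m * u m x)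
    (horth : ∀ m n, (m = i ∨ m = j) → (n = i ∨ n = j) →
      ∫ x, u m x * u n x ∂ν = if m = n then 1 else 0) :
    ∫ θ, ((Real.sqrt (lam i))⁻¹ * ∫ x, G θ x * u i x ∂ν) *
        ((Real.sqrt (lam j))⁻¹ * ∫ x, G θ x * u j x ∂ν) ∂P =
      if i = j then 1 else 0 :=
  stmt_1_general P ν G hG hL2 u lam i j hu hlami heig horth
end

section
/- Let r ≥ 1 and let (ℍ, π) be a probability space. Let Σ : ℍ → (symmetric positive definite r × r real matrices) be measurable with each matrix entry q ↦ Σ(q)_{ij} integrable, satisfying ∫_ℍ Σ(q) dπ(q) = I_r (entrywise), and with q ↦ log det Σ(q) integrable. Then for every μ ∈ ℝ^r and every symmetric positive definite r × r matrix C, ∫_ℍ D_KL(N(0, Σ(q)) ‖ N(μ, C)) dπ(q) ≥ ∫_ℍ D_KL(N(0, Σ(q)) ‖ N(0, I_r)) dπ(q), with equality if and only if μ = 0 and C = I_r. That is, the standard Gaussian N(0, I_r) is the unique Gaussian distribution minimizing the π-averaged Kullback–Leibler divergence from the conditional priors N(0, Σ(q)). -/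
/-! The divergence `D_KL(N(0, Σ) ‖ N(m, C))` equals
`(log det C - log det Σ + tr (C⁻¹ Σ) + mᵀ C⁻¹ m - r) / 2`, which is affine in `Σ`. Averaging it
over `π` with `∫ Σ dπ = I` therefore gives the averaged divergence from `N(0, I)` plus
`(tr C⁻¹ - log det C⁻¹ - r + mᵀ C⁻¹ m) / 2`. In terms of the eigenvalues `λᵢ` of `C⁻¹` the first
part is `∑ (λᵢ - 1 - log λᵢ) ≥ 0`, which vanishes only when every `λᵢ = 1`, and the quadratic term
vanishes only when `m = 0`.

The second moments behind the divergence formula come from writing `N(0, A Aᵀ)` as the image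
of the product of standard normal laws under `x ↦ A x`. -/

open MeasureTheory Matrix

/-- The multivariate Gaussian measure `N(m, S)` on `n → ℝ`, defined through its
Lebesgue density `x ↦ (2π)^{-card n/2} (det S)^{-1/2} exp(-(x-m)ᵀ S⁻¹ (x-m)/2)`. -/
noncomputable def mvGaussian {n : Type*} [Fintype n] [DecidableEq n]
    (m : n → ℝ) (S : Matrix n n ℝ) : Measure (n → ℝ) :=
  volume.withDensity fun x =>
    ENNReal.ofReal ((Real.sqrt ((2 * Real.pi) ^ Fintype.card n * S.det))⁻¹ *
      Real.exp (-((x - m) ⬝ᵥ S⁻¹ *ᵥ (x - m)) / 2))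

/-- The Kullback–Leibler divergence `D_KL(μ ‖ ν) = ∫ log (dμ/dν) dμ`. -/
noncomputable def klDiv {α : Type*} [MeasurableSpace α] (μ ν : Measure α) : ℝ :=
  ∫ x, Real.log (μ.rnDeriv ν x).toReal ∂μ

open ProbabilityTheory

section
open Real

theorem MeasureTheory.Measure.pi_withDensity_ofReal {ι : Type*} [Fintype ι] {α : ι → Type*}
    [∀ i, MeasurableSpace (α i)] {μ : ∀ i, Measure (α i)} [∀ i, SigmaFinite (μ i)]
    {f : ∀ i, α i → ℝ} (hf : ∀ i, Integrable (f i) (μ i)) (hf0 : ∀ i, 0 ≤ f i) :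
    Measure.pi (fun i => (μ i).withDensity fun x => ENNReal.ofReal (f i x)) =
      (Measure.pi μ).withDensity fun x => ENNReal.ofReal (∏ i, f i (x i)) := by
  classical
  refine Measure.pi_eq fun s hs => ?_
  have hprod : Integrable (fun x : ∀ i, α i => ∏ i, f i (x i)) (Measure.pi μ) :=
    Integrable.fintype_prod_dep hf
  rw [withDensity_apply _ (MeasurableSet.univ_pi hs),
    ← ofReal_integral_eq_lintegral_ofReal hprod.restrict
      (Filter.Eventually.of_forall fun x => Finset.prod_nonneg fun i _ => hf0 i (x i)),
    Measure.restrict_pi_pi, integral_fintype_prod_eq_prod,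
    ENNReal.ofReal_prod_of_nonneg fun i _ => setIntegral_nonneg (hs i) fun x _ => hf0 i x]
  refine Finset.prod_congr rfl fun i _ => ?_
  rw [withDensity_apply _ (hs i), ofReal_integral_eq_lintegral_ofReal (hf i).restrict
    (Filter.Eventually.of_forall (hf0 i))]

lemma klDiv_withDensity_ofReal {α : Type*} [MeasurableSpace α] {ν : Measure α} [SigmaFinite ν]
    {f g : α → ℝ} (hf : Measurable f) (hg : Measurable g) (hf0 : ∀ x, 0 < f x)
    (hg0 : ∀ x, 0 < g x) :
    klDiv (ν.withDensity fun x => ENNReal.ofReal (f x))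
        (ν.withDensity fun x => ENNReal.ofReal (g x)) =
      ∫ x, (log (f x) - log (g x)) ∂ν.withDensity fun x => ENNReal.ofReal (f x) := by
  set μ := ν.withDensity fun x => ENNReal.ofReal (f x)
  set ρ := ν.withDensity fun x => ENNReal.ofReal (g x)
  have hF := hf.ennreal_ofReal
  have hG := hg.ennreal_ofReal
  have hG0 : ∀ x, ENNReal.ofReal (g x) ≠ 0 := fun x => ENNReal.ofReal_pos.mpr (hg0 x) |>.ne'
  have hμρ : μ = ρ.withDensity fun x => ENNReal.ofReal (f x) / ENNReal.ofReal (g x) := by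
    refine Eq.trans (congrArg ν.withDensity (funext fun x => ?_))
      (withDensity_mul ν hG (hF.div hG))
    exact (ENNReal.mul_div_cancel (hG0 x) ENNReal.ofReal_ne_top).symm
  have hrn : μ.rnDeriv ρ =ᵐ[ρ] fun x => ENNReal.ofReal (f x) / ENNReal.ofReal (g x) := by
    conv_lhs => rw [hμρ]
    exact Measure.rnDeriv_withDensity ρ (hF.div hG)
  have hμ_ac : μ ≪ ρ :=
    (withDensity_absolutelyContinuous _ _).trans
      (withDensity_absolutelyContinuous' hG.aemeasurable (Filter.Eventually.of_forall hG0))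
  unfold klDiv
  refine integral_congr_ae ((hμ_ac.ae_eq hrn).mono fun x hx => ?_)
  dsimp only at hx ⊢
  rw [hx, ENNReal.toReal_div, ENNReal.toReal_ofReal (hf0 x).le, ENNReal.toReal_ofReal (hg0 x).le,
    log_div (hf0 x).ne' (hg0 x).ne']

lemma Real.sub_one_sub_log_nonneg {t : ℝ} (ht : 0 < t) : 0 ≤ t - 1 - log t := by
  linarith [log_le_sub_one_of_pos ht]

lemma Real.sub_one_sub_log_eq_zero_iff {t : ℝ} (ht : 0 < t) : t - 1 - log t = 0 ↔ t = 1 := by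
  refine ⟨fun h => by_contra fun h1 => ?_, fun h => by simp [h]⟩
  linarith [log_lt_sub_one_of_pos ht h1]

lemma Matrix.log_det_nonsing_inv {ι : Type*} [Fintype ι] [DecidableEq ι] (C : Matrix ι ι ℝ) :
    log C⁻¹.det = -log C.det := by
  rw [det_nonsing_inv, Ring.inverse_eq_inv', log_inv]

namespace Matrix.PosDef

variable {ι : Type*} [Fintype ι] [DecidableEq ι] {C D S : Matrix ι ι ℝ}

lemma trace_sub_log_det_sub_card (hD : D.PosDef) :
    trace D - log D.det - Fintype.card ι =
      ∑ i, (hD.isHermitian.eigenvalues i - 1 - log (hD.isHermitian.eigenvalues i)) := by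
  have hdet : D.det = ∏ i, hD.isHermitian.eigenvalues i := by
    simpa using hD.isHermitian.det_eq_prod_eigenvalues
  rw [hD.isHermitian.trace_eq_sum_eigenvalues, hdet,
    log_prod fun i _ => (hD.eigenvalues_pos i).ne']
  simp only [RCLike.ofReal_real_eq_id, id_eq, Finset.sum_sub_distrib, Finset.sum_const,
    Finset.card_univ, nsmul_eq_mul, mul_one]
  ring

lemma card_le_trace_sub_log_det (hD : D.PosDef) : (Fintype.card ι : ℝ) ≤ trace D - log D.det := by
  have := hD.trace_sub_log_det_sub_card ▸
    Finset.sum_nonneg fun i _ => sub_one_sub_log_nonneg (hD.eigenvalues_pos i)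
  linarith

lemma trace_sub_log_det_eq_card_iff (hD : D.PosDef) :
    trace D - log D.det = Fintype.card ι ↔ D = 1 := by
  refine ⟨fun h => ?_, fun h => by simp [h]⟩
  have hsum := hD.trace_sub_log_det_sub_card
  rw [h, sub_self, eq_comm, Finset.sum_eq_zero_iff_of_nonneg fun i _ =>
    sub_one_sub_log_nonneg (hD.eigenvalues_pos i)] at hsum
  have heig : hD.isHermitian.eigenvalues = 1 := funext fun i =>
    (sub_one_sub_log_eq_zero_iff (hD.eigenvalues_pos i)).mp (hsum i (Finset.mem_univ i))
  rw [hD.isHermitian.spectral_theorem, heig]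
  simp

lemma card_le_log_det_add_trace_inv_add_quad (hC : C.PosDef) (m : ι → ℝ) :
    (Fintype.card ι : ℝ) ≤ log C.det + trace C⁻¹ + m ⬝ᵥ C⁻¹ *ᵥ m := by
  have hquad := hC.inv.posSemidef.dotProduct_mulVec_nonneg m
  simp only [star_trivial] at hquad
  linarith [hC.inv.card_le_trace_sub_log_det, log_det_nonsing_inv C]

lemma log_det_add_trace_inv_add_quad_eq_card_iff (hC : C.PosDef) (m : ι → ℝ) :
    log C.det + trace C⁻¹ + m ⬝ᵥ C⁻¹ *ᵥ m = Fintype.card ι ↔ m = 0 ∧ C = 1 := by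
  refine ⟨fun h => ?_, fun ⟨hm, hC1⟩ => by simp [hm, hC1]⟩
  have hquad := hC.inv.posSemidef.dotProduct_mulVec_nonneg m
  have htr := hC.inv.card_le_trace_sub_log_det
  simp only [star_trivial] at hquad
  rw [← neg_neg (log C.det), ← log_det_nonsing_inv] at h
  have hm : m = 0 := by
    by_contra hm
    have := hC.inv.dotProduct_mulVec_pos hm
    simp only [star_trivial] at this
    linarith
  have hCinv : C⁻¹ = 1 := hC.inv.trace_sub_log_det_eq_card_iff.mp (by linarith)
  refine ⟨hm, ?_⟩
  rw [← nonsing_inv_nonsing_inv C hC.det_pos.ne'.isUnit, hCinv, inv_one]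

open scoped MatrixOrder in
lemma exists_mul_transpose_eq (hS : S.PosDef) :
    ∃ A : Matrix ι ι ℝ, A.det ≠ 0 ∧ A * Aᵀ = S := by
  have hsymm : (CFC.sqrt S)ᵀ = CFC.sqrt S := by
    simpa [IsHermitian, conjTranspose_eq_transpose_of_trivial] using
      (CFC.sqrt_nonneg S).posSemidef.isHermitian
  have hsq : CFC.sqrt S * CFC.sqrt S = S := CFC.sqrt_mul_sqrt_self S hS.posSemidef.nonneg
  refine ⟨CFC.sqrt S, fun h0 => hS.det_pos.ne' ?_, by rw [hsymm, hsq]⟩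
  rw [← hsq, det_mul, h0, zero_mul]

end Matrix.PosDef

section
variable {ι : Type*}

structure IsCenteredWithCovariance (μ : Measure (ι → ℝ)) (S : Matrix ι ι ℝ) : Prop where
  memLp_eval : ∀ i, MemLp (fun x => x i) 2 μ
  integral_eval_eq_zero : ∀ i, ∫ x, x i ∂μ = 0
  integral_eval_mul_eval : ∀ i j, ∫ x, x i * x j ∂μ = S i j

lemma integral_sq_gaussianReal_zero_one : ∫ t, t ^ 2 ∂gaussianReal 0 1 = 1 := by
  have h := variance_eq_integral (μ := gaussianReal 0 1) aemeasurable_id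
  simpa [variance_id_gaussianReal, integral_id_gaussianReal] using h.symm

lemma isCenteredWithCovariance_pi_gaussianReal [Fintype ι] [DecidableEq ι] :
    IsCenteredWithCovariance (Measure.pi fun _ : ι => gaussianReal 0 1) 1 where
  memLp_eval i := (memLp_id_gaussianReal 2).comp_measurePreserving (measurePreserving_eval _ i)
  integral_eval_eq_zero i := by rw [integral_eval, integral_id_gaussianReal]
  integral_eval_mul_eval i j := by
    rcases eq_or_ne i j with rfl | hij
    · rw [one_apply_eq, ← integral_sq_gaussianReal_zero_one,
        ← integral_comp_eval (μ := fun _ : ι => gaussianReal 0 1) (i := i) (by fun_prop)]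
      simp only [sq]
    · have hindep := (iIndepFun_pi (X := fun _ : ι => (id : ℝ → ℝ))
        (μ := fun _ => gaussianReal 0 1) fun _ => aemeasurable_id).indepFun hij
      simp only [id_eq] at hindep
      rw [one_apply_ne hij, hindep.integral_fun_mul_eq_mul_integral
        (measurable_pi_apply i).aestronglyMeasurable (measurable_pi_apply j).aestronglyMeasurable]
      simp [integral_eval, integral_id_gaussianReal]

namespace IsCenteredWithCovariance

variable {μ : Measure (ι → ℝ)} {S : Matrix ι ι ℝ}

lemma integrable_eval_mul_eval (h : IsCenteredWithCovariance μ S) (i j : ι) :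
    Integrable (fun x => x i * x j) μ :=
  (h.memLp_eval i).integrable_mul (h.memLp_eval j)

lemma map_mulVec [Fintype ι] [IsFiniteMeasure μ] (h : IsCenteredWithCovariance μ S)
    (A : Matrix ι ι ℝ) :
    IsCenteredWithCovariance (μ.map (A *ᵥ ·)) (A * S * Aᵀ) := by
  have hA : Measurable (A *ᵥ · : (ι → ℝ) → ι → ℝ) := (mulVecLin A).continuous_on_pi.measurable
  have hmeas : ∀ i, AEStronglyMeasurable (fun x : ι → ℝ => x i) (μ.map (A *ᵥ ·)) := fun i =>
    (measurable_pi_apply i).aestronglyMeasurable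
  have hint : ∀ i, Integrable (fun x : ι → ℝ => x i) μ := fun i =>
    (h.memLp_eval i).integrable one_le_two
  refine ⟨fun i => ?_, fun i => ?_, fun i j => ?_⟩
  · rw [memLp_map_measure_iff (hmeas i) hA.aemeasurable]
    have hsum : (fun x : ι → ℝ => x i) ∘ (A *ᵥ ·) = ∑ k, fun x => A i k * x k := by
      ext x; simp [mulVec, dotProduct]
    rw [hsum]
    exact memLp_finsetSum' Finset.univ fun k _ => (h.memLp_eval k).const_mul (A i k)
  · rw [integral_map hA.aemeasurable (hmeas i)]
    simp only [mulVec, dotProduct]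
    rw [integral_finsetSum _ fun k _ => (hint k).const_mul _]
    simp [integral_const_mul, h.integral_eval_eq_zero]
  · rw [integral_map hA.aemeasurable
      (by fun_prop : Measurable fun x : ι → ℝ => x i * x j).aestronglyMeasurable]
    have hexpand : ∀ y : ι → ℝ, (A *ᵥ y) i * (A *ᵥ y) j =
        ∑ k, ∑ l, A i k * A j l * (y k * y l) := fun y => by
      simp only [mulVec, dotProduct, Finset.sum_mul_sum]
      exact Finset.sum_congr rfl fun k _ => Finset.sum_congr rfl fun l _ => by ring
    simp only [hexpand]
    rw [integral_finsetSum _ fun k _ => integrable_finsetSum _ fun l _ =>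
      (h.integrable_eval_mul_eval k l).const_mul _]
    simp_rw [integral_finsetSum _ fun l _ => (h.integrable_eval_mul_eval _ l).const_mul _,
      integral_const_mul, h.integral_eval_mul_eval, mul_apply, transpose_apply, Finset.sum_mul]
    rw [Finset.sum_comm]
    exact Finset.sum_congr rfl fun l _ => Finset.sum_congr rfl fun k _ => by ring

lemma transpose_eq (h : IsCenteredWithCovariance μ S) : Sᵀ = S := by
  ext i j
  rw [transpose_apply, ← h.integral_eval_mul_eval, ← h.integral_eval_mul_eval]
  simp only [mul_comm]

lemma integrable_sub_mul_sub [IsFiniteMeasure μ] (h : IsCenteredWithCovariance μ S)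
    (m : ι → ℝ) (i j : ι) : Integrable (fun x => (x i - m i) * (x j - m j)) μ :=
  ((h.memLp_eval i).sub (memLp_const _)).integrable_mul ((h.memLp_eval j).sub (memLp_const _))

lemma integral_sub_mul_sub [IsProbabilityMeasure μ] (h : IsCenteredWithCovariance μ S)
    (m : ι → ℝ) (i j : ι) : ∫ x, (x i - m i) * (x j - m j) ∂μ = S i j + m i * m j := by
  have hint : ∀ k, Integrable (fun x : ι → ℝ => x k) μ := fun k =>
    (h.memLp_eval k).integrable one_le_two
  have hexpand : ∀ x : ι → ℝ, (x i - m i) * (x j - m j) =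
      x i * x j - (m j * x i + m i * x j) + m i * m j := fun x => by ring
  have hlin : Integrable (fun x : ι → ℝ => m j * x i + m i * x j) μ :=
    ((hint i).const_mul _).add ((hint j).const_mul _)
  have hquad : Integrable (fun x : ι → ℝ => x i * x j - (m j * x i + m i * x j)) μ :=
    (h.integrable_eval_mul_eval i j).sub hlin
  simp_rw [hexpand]
  rw [integral_add hquad (integrable_const _), integral_sub (h.integrable_eval_mul_eval i j) hlin,
    integral_add ((hint i).const_mul _) ((hint j).const_mul _), integral_const_mul,
    integral_const_mul, h.integral_eval_eq_zero, h.integral_eval_eq_zero,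
    h.integral_eval_mul_eval, integral_const, probReal_univ]
  simp

variable [Fintype ι]

lemma quadForm_sub_eq_sum (N : Matrix ι ι ℝ) (x m : ι → ℝ) :
    (x - m) ⬝ᵥ N *ᵥ (x - m) = ∑ i, ∑ j, N i j * ((x i - m i) * (x j - m j)) := by
  simp only [dotProduct, mulVec, Finset.mul_sum, Pi.sub_apply]
  exact Finset.sum_congr rfl fun i _ => Finset.sum_congr rfl fun j _ => by ring

lemma integrable_quadForm_sub [IsFiniteMeasure μ] (h : IsCenteredWithCovariance μ S)
    (N : Matrix ι ι ℝ) (m : ι → ℝ) : Integrable (fun x => (x - m) ⬝ᵥ N *ᵥ (x - m)) μ := by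
  simp_rw [quadForm_sub_eq_sum]
  exact integrable_finsetSum _ fun i _ => integrable_finsetSum _ fun j _ =>
    (h.integrable_sub_mul_sub m i j).const_mul _

lemma integral_quadForm_sub [IsProbabilityMeasure μ] (h : IsCenteredWithCovariance μ S)
    (N : Matrix ι ι ℝ) (m : ι → ℝ) :
    ∫ x, (x - m) ⬝ᵥ N *ᵥ (x - m) ∂μ = trace (N * S) + m ⬝ᵥ N *ᵥ m := by
  simp_rw [quadForm_sub_eq_sum]
  rw [integral_finsetSum _ fun i _ => by exact integrable_finsetSum _ fun j _ =>
    (h.integrable_sub_mul_sub m i j).const_mul _]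
  simp_rw [integral_finsetSum _ fun j _ => (h.integrable_sub_mul_sub m _ j).const_mul _,
    integral_const_mul, h.integral_sub_mul_sub]
  -- the expansion produces `∑ i, ∑ j, N i j * S i j`, which is `trace (N * Sᵀ)`
  conv_rhs => rw [← h.transpose_eq]
  simp only [trace, diag, mul_apply, transpose_apply, dotProduct, mulVec, Finset.mul_sum,
    mul_add, Finset.sum_add_distrib]
  congr 1
  exact Finset.sum_congr rfl fun i _ => Finset.sum_congr rfl fun j _ => by ring

end IsCenteredWithCovariance

end

section
variable {ι : Type*} [Fintype ι] [DecidableEq ι] {S : Matrix ι ι ℝ}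

noncomputable def mvGaussianPDFReal (m : ι → ℝ) (S : Matrix ι ι ℝ) (x : ι → ℝ) : ℝ :=
  (√((2 * π) ^ Fintype.card ι * S.det))⁻¹ * exp (-((x - m) ⬝ᵥ S⁻¹ *ᵥ (x - m)) / 2)

lemma mvGaussian_eq_withDensity (m : ι → ℝ) (S : Matrix ι ι ℝ) :
    mvGaussian m S = volume.withDensity fun x => ENNReal.ofReal (mvGaussianPDFReal m S x) :=
  rfl

lemma measurable_mvGaussianPDFReal (m : ι → ℝ) (S : Matrix ι ι ℝ) :
    Measurable (mvGaussianPDFReal m S) := by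
  unfold mvGaussianPDFReal
  fun_prop

lemma Matrix.PosDef.mvGaussianPDFReal_pos (hS : S.PosDef) (m x : ι → ℝ) :
    0 < mvGaussianPDFReal m S x := by
  have := hS.det_pos
  unfold mvGaussianPDFReal
  positivity

lemma Matrix.PosDef.log_mvGaussianPDFReal (hS : S.PosDef) (m x : ι → ℝ) :
    log (mvGaussianPDFReal m S x) = -(Fintype.card ι * log (2 * π) + log S.det) / 2 -
      (x - m) ⬝ᵥ S⁻¹ *ᵥ (x - m) / 2 := by
  have := hS.det_pos
  rw [mvGaussianPDFReal, log_mul (by positivity) (exp_pos _).ne', log_exp, log_inv,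
    log_sqrt (by positivity), log_mul (by positivity) this.ne', log_pow]
  ring

lemma mvGaussianPDFReal_zero_one (x : ι → ℝ) :
    mvGaussianPDFReal 0 1 x = ∏ i, gaussianPDFReal 0 1 (x i) := by
  have h2π : (2 * π) ^ Fintype.card ι = ∏ _ : ι, 2 * π := by simp
  simp only [mvGaussianPDFReal, gaussianPDFReal, Finset.prod_mul_distrib, ← exp_sum,
    det_one, inv_one, one_mulVec, sub_zero, mul_one, NNReal.coe_one]
  rw [h2π, Real.sqrt_prod _ fun _ _ => (by positivity : (0 : ℝ) ≤ 2 * π),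
    Finset.prod_inv_distrib]
  congr 2
  simp only [dotProduct, ← Finset.sum_div, Finset.sum_neg_distrib, sq, neg_div]

lemma mvGaussian_zero_one : mvGaussian (0 : ι → ℝ) 1 = Measure.pi fun _ => gaussianReal 0 1 := by
  simp_rw [gaussianReal_of_var_ne_zero 0 one_ne_zero, gaussianPDF_def,
    Measure.pi_withDensity_ofReal (fun _ => integrable_gaussianPDFReal 0 1)
      (fun _ => gaussianPDFReal_nonneg 0 1), ← volume_pi, mvGaussian_eq_withDensity,
    mvGaussianPDFReal_zero_one]

lemma abs_det_mul_mvGaussianPDFReal_mulVec {A : Matrix ι ι ℝ} (hA : A.det ≠ 0) (y : ι → ℝ) :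
    |A.det| * mvGaussianPDFReal 0 (A * Aᵀ) (A *ᵥ y) = mvGaussianPDFReal 0 1 y := by
  have hunit : IsUnit A.det := hA.isUnit
  have hquad : (A *ᵥ y) ⬝ᵥ (A * Aᵀ)⁻¹ *ᵥ (A *ᵥ y) = y ⬝ᵥ y := by
    rw [Matrix.mul_inv_rev, mulVec_mulVec, Matrix.mul_assoc, nonsing_inv_mul _ hunit,
      Matrix.mul_one, ← vecMul_transpose, ← dotProduct_mulVec, mulVec_mulVec,
      mul_nonsing_inv _ (by rwa [det_transpose]), one_mulVec]
  have hsqrt : √((2 * π) ^ Fintype.card ι * (A * Aᵀ).det) =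
      √((2 * π) ^ Fintype.card ι) * |A.det| := by
    rw [det_mul, det_transpose, Real.sqrt_mul (by positivity), Real.sqrt_mul_self_eq_abs]
  simp only [mvGaussianPDFReal, sub_zero, hquad, hsqrt, det_one, mul_one, inv_one, one_mulVec]
  field_simp

lemma mvGaussian_zero_mul_transpose {A : Matrix ι ι ℝ} (hA : A.det ≠ 0) :
    mvGaussian 0 (A * Aᵀ) = (mvGaussian 0 1).map (A *ᵥ ·) := by
  have hAmeas : Measurable (A *ᵥ · : (ι → ℝ) → ι → ℝ) := (mulVecLin A).continuous_on_pi.measurable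
  have hvol : (volume : Measure (ι → ℝ)) =
      ENNReal.ofReal |A.det| • (volume : Measure (ι → ℝ)).map (A *ᵥ ·) := by
    have hmap : (volume : Measure (ι → ℝ)).map (A *ᵥ ·) = ENNReal.ofReal |A.det⁻¹| • volume :=
      Real.map_matrix_volume_pi_eq_smul_volume_pi hA
    rw [hmap, smul_smul, ← ENNReal.ofReal_mul (abs_nonneg _), ← abs_mul, mul_inv_cancel₀ hA,
      abs_one, ENNReal.ofReal_one, one_smul]
  ext s hs
  rw [Measure.map_apply hAmeas hs, mvGaussian_eq_withDensity, mvGaussian_eq_withDensity,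
    withDensity_apply _ hs, withDensity_apply _ (hAmeas hs)]
  conv_lhs => rw [hvol]
  rw [Measure.restrict_smul, lintegral_smul_measure, setLIntegral_map hs
      (measurable_mvGaussianPDFReal _ _).ennreal_ofReal hAmeas, smul_eq_mul,
    ← lintegral_const_mul' _ _ ENNReal.ofReal_ne_top]
  refine setLIntegral_congr_fun (hAmeas hs) fun y _ => ?_
  rw [← ENNReal.ofReal_mul (abs_nonneg _), abs_det_mul_mvGaussianPDFReal_mulVec hA]

lemma Matrix.PosDef.isProbabilityMeasure_mvGaussian_zero (hS : S.PosDef) :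
    IsProbabilityMeasure (mvGaussian 0 S) := by
  obtain ⟨A, hA, rfl⟩ := hS.exists_mul_transpose_eq
  rw [mvGaussian_zero_mul_transpose hA, mvGaussian_zero_one]
  exact Measure.isProbabilityMeasure_map (mulVecLin A).continuous_on_pi.aemeasurable

lemma Matrix.PosDef.isCenteredWithCovariance_mvGaussian_zero (hS : S.PosDef) :
    IsCenteredWithCovariance (mvGaussian 0 S) S := by
  obtain ⟨A, hA, rfl⟩ := hS.exists_mul_transpose_eq
  rw [mvGaussian_zero_mul_transpose hA, mvGaussian_zero_one]
  simpa using isCenteredWithCovariance_pi_gaussianReal.map_mulVec A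

lemma Matrix.PosDef.klDiv_mvGaussian (hS : S.PosDef) {C : Matrix ι ι ℝ} (hC : C.PosDef)
    (m : ι → ℝ) :
    klDiv (mvGaussian 0 S) (mvGaussian m C) =
      (log C.det - log S.det + trace (C⁻¹ * S) + m ⬝ᵥ C⁻¹ *ᵥ m - Fintype.card ι) / 2 := by
  have hcov := hS.isCenteredWithCovariance_mvGaussian_zero
  have := hS.isProbabilityMeasure_mvGaussian_zero
  rw [mvGaussian_eq_withDensity, mvGaussian_eq_withDensity,
    klDiv_withDensity_ofReal (measurable_mvGaussianPDFReal _ _) (measurable_mvGaussianPDFReal _ _)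
      (hS.mvGaussianPDFReal_pos 0) (hC.mvGaussianPDFReal_pos m), ← mvGaussian_eq_withDensity]
  have hlog : ∀ x, log (mvGaussianPDFReal 0 S x) - log (mvGaussianPDFReal m C x) =
      (log C.det - log S.det) / 2 + (x - m) ⬝ᵥ C⁻¹ *ᵥ (x - m) / 2 -
        (x - 0) ⬝ᵥ S⁻¹ *ᵥ (x - 0) / 2 := fun x => by
    rw [hS.log_mvGaussianPDFReal, hC.log_mvGaussianPDFReal]
    ring
  have hQC : Integrable (fun x => (x - m) ⬝ᵥ C⁻¹ *ᵥ (x - m) / 2) (mvGaussian 0 S) :=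
    (hcov.integrable_quadForm_sub _ _).div_const _
  have hQS : Integrable (fun x => (x - 0) ⬝ᵥ S⁻¹ *ᵥ (x - 0) / 2) (mvGaussian 0 S) :=
    (hcov.integrable_quadForm_sub _ _).div_const _
  have hconstQC : Integrable (fun x => (log C.det - log S.det) / 2 +
      (x - m) ⬝ᵥ C⁻¹ *ᵥ (x - m) / 2) (mvGaussian 0 S) := (integrable_const _).add hQC
  simp_rw [hlog]
  rw [integral_sub hconstQC hQS, integral_add (integrable_const _) hQC,
    integral_const, integral_div, integral_div, hcov.integral_quadForm_sub,
    hcov.integral_quadForm_sub, nonsing_inv_mul _ hS.det_pos.ne'.isUnit, trace_one, probReal_univ]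
  simp only [one_smul, mulVec_zero, dotProduct_zero, add_zero]
  ring

end

section
variable {Q : Type*} [MeasurableSpace Q] {P : Measure Q} {ι : Type*} [Fintype ι]
  {S : Q → Matrix ι ι ℝ}

lemma integrable_trace_mul (hSint : ∀ i j, Integrable (fun q => S q i j) P)
    (M : Matrix ι ι ℝ) : Integrable (fun q => trace (M * S q)) P := by
  simp only [trace, diag, mul_apply]
  exact integrable_finsetSum _ fun i _ => integrable_finsetSum _ fun j _ =>
    (hSint j i).const_mul _

lemma integral_trace_mul (hSint : ∀ i j, Integrable (fun q => S q i j) P)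
    {S₀ : Matrix ι ι ℝ} (hSavg : ∀ i j, ∫ q, S q i j ∂P = S₀ i j) (M : Matrix ι ι ℝ) :
    ∫ q, trace (M * S q) ∂P = trace (M * S₀) := by
  simp only [trace, diag, mul_apply]
  rw [integral_finsetSum _ fun i _ => by
    exact integrable_finsetSum _ fun j _ => (hSint j i).const_mul _]
  simp_rw [integral_finsetSum _ fun j _ => (hSint j _).const_mul _, integral_const_mul, hSavg]

lemma integral_klDiv_mvGaussian [DecidableEq ι] [IsProbabilityMeasure P]
    (hSpd : ∀ q, (S q).PosDef) (hSint : ∀ i j, Integrable (fun q => S q i j) P)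
    {S₀ : Matrix ι ι ℝ} (hSavg : ∀ i j, ∫ q, S q i j ∂P = S₀ i j)
    (hlogdet : Integrable (fun q => log (S q).det) P) {C : Matrix ι ι ℝ} (hC : C.PosDef)
    (m : ι → ℝ) :
    ∫ q, klDiv (mvGaussian 0 (S q)) (mvGaussian m C) ∂P =
      (log C.det + m ⬝ᵥ C⁻¹ *ᵥ m - Fintype.card ι + trace (C⁻¹ * S₀) -
        ∫ q, log (S q).det ∂P) / 2 := by
  set a := log C.det + m ⬝ᵥ C⁻¹ *ᵥ m - Fintype.card ι
  have hKL : (fun q => klDiv (mvGaussian 0 (S q)) (mvGaussian m C)) =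
      fun q => (a + trace (C⁻¹ * S q) - log (S q).det) / 2 := funext fun q => by
    rw [(hSpd q).klDiv_mvGaussian hC m]
    ring
  have haT : Integrable (fun q => a + trace (C⁻¹ * S q)) P :=
    (integrable_const a).add (integrable_trace_mul hSint _)
  rw [hKL, integral_div, integral_sub haT hlogdet,
    integral_add (integrable_const a) (integrable_trace_mul hSint _), integral_const,
    probReal_univ, one_smul, integral_trace_mul hSint hSavg]

end

end

theorem stmt_11_general {r : ℕ} {Q : Type*} [MeasurableSpace Q]
    (π : Measure Q) [IsProbabilityMeasure π]
    (S : Q → Matrix (Fin r) (Fin r) ℝ) (hSpd : ∀ q, (S q).PosDef)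
    (hSint : ∀ i j, Integrable (fun q => S q i j) π)
    (hSavg : ∀ i j, ∫ q, S q i j ∂π = (1 : Matrix (Fin r) (Fin r) ℝ) i j)
    (hlogdet : Integrable (fun q => Real.log (S q).det) π) :
    ∀ (m : Fin r → ℝ) (C : Matrix (Fin r) (Fin r) ℝ), C.PosDef →
      (∫ q, klDiv (mvGaussian 0 (S q)) (mvGaussian 0 1) ∂π ≤
        ∫ q, klDiv (mvGaussian 0 (S q)) (mvGaussian m C) ∂π) ∧
      (∫ q, klDiv (mvGaussian 0 (S q)) (mvGaussian m C) ∂π =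
          ∫ q, klDiv (mvGaussian 0 (S q)) (mvGaussian 0 1) ∂π ↔
        m = 0 ∧ C = 1) := by
  intro m C hC
  have hbound := hC.card_le_log_det_add_trace_inv_add_quad m
  have hiff := hC.log_det_add_trace_inv_add_quad_eq_card_iff m
  rw [integral_klDiv_mvGaussian hSpd hSint hSavg hlogdet hC m,
    integral_klDiv_mvGaussian hSpd hSint hSavg hlogdet PosDef.one 0]
  simp only [Matrix.mul_one, inv_one, det_one, Real.log_one, trace_one, mulVec_zero,
    dotProduct_zero] at hbound hiff ⊢
  refine ⟨by linarith, ?_⟩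
  rw [← hiff]
  constructor <;> intro h <;> linarith

/-- if a measurable family `Σ(q)` of symmetric positive definite matrices
has identity mean and integrable log-determinant, then the standard Gaussian `N(0, I)`
is the unique Gaussian minimizing the `π`-averaged Kullback–Leibler divergence from the
conditional priors `N(0, Σ(q))`. -/
theorem stmt_11 {r : ℕ} (hr : 1 ≤ r) {Q : Type*} [MeasurableSpace Q]
    (π : Measure Q) [IsProbabilityMeasure π]
    (S : Q → Matrix (Fin r) (Fin r) ℝ) (hSpd : ∀ q, (S q).PosDef)
    (hSmeas : ∀ i j, Measurable fun q => S q i j)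
    (hSint : ∀ i j, Integrable (fun q => S q i j) π)
    (hSavg : ∀ i j, ∫ q, S q i j ∂π = (1 : Matrix (Fin r) (Fin r) ℝ) i j)
    (hlogdet : Integrable (fun q => Real.log (S q).det) π) :
    ∀ (m : Fin r → ℝ) (C : Matrix (Fin r) (Fin r) ℝ), C.PosDef →
      (∫ q, klDiv (mvGaussian 0 (S q)) (mvGaussian 0 1) ∂π ≤
        ∫ q, klDiv (mvGaussian 0 (S q)) (mvGaussian m C) ∂π) ∧
      (∫ q, klDiv (mvGaussian 0 (S q)) (mvGaussian m C) ∂π =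
          ∫ q, klDiv (mvGaussian 0 (S q)) (mvGaussian 0 1) ∂π ↔
        m = 0 ∧ C = 1) :=
  stmt_11_general π S hSpd hSint hSavg hlogdet
end

section
/- Let d ≥ 1, A > 0, l > 0, and let x_1, …, x_n be pairwise distinct points in ℝ^d. Then the n × n matrix M with entries M_{ij} = A · exp(−‖x_i − x_j‖² / (2 l²)) is symmetric positive definite: for every nonzero c ∈ ℝ^n, ∑_{i,j} c_i c_j M_{ij} > 0. -/
/-!
Since `‖x - y‖² = ‖x‖² - 2⟪x, y⟫ + ‖y‖²`, the Gaussian kernel factors as `w_i w_j exp ⟪x_i, x_j⟫`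
with `w_i > 0`, so it suffices to show that `exp ⟪x_i, x_j⟫` is positive definite. Expanding the
exponential, `∑ e_i e_j exp ⟪x_i, x_j⟫ = ∑_m (1/m!) ∑_k (∑_i e_i x_i^k)²`, where `x_i^k` runs over
the degree-`m` monomials in the coordinates of `x_i`, so every term is nonnegative. If all of them
vanished, `∑_i e_i p(x_i) = 0` for every polynomial `p`; a product of coordinate differences
vanishing at every point except `x_{i₀}` then forces `e_{i₀} = 0`.
-/

open Finset Matrix Real
open scoped InnerProductSpace

theorem sum_sum_mul_mul_dotProduct_pow_eq_sum_sq {ι κ : Type*} [Fintype ι] [Fintype κ]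
    (y : ι → κ → ℝ) (e : ι → ℝ) (m : ℕ) :
    ∑ i, ∑ j, e i * e j * (y i ⬝ᵥ y j) ^ m = ∑ k : Fin m → κ, (∑ i, e i * ∏ u, y i (k u)) ^ 2 := by
  calc ∑ i, ∑ j, e i * e j * (y i ⬝ᵥ y j) ^ m
      = ∑ i, ∑ j, ∑ k : Fin m → κ, e i * (∏ u, y i (k u)) * (e j * ∏ u, y j (k u)) := by
        refine sum_congr rfl fun i _ => sum_congr rfl fun j _ => ?_
        simp only [dotProduct, Fintype.sum_pow, mul_sum, prod_mul_distrib]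
        exact sum_congr rfl fun k _ => by ring
    _ = ∑ k : Fin m → κ, (∑ i, e i * ∏ u, y i (k u)) ^ 2 := by
        simp only [sq, sum_mul_sum]
        exact (sum_congr rfl fun i _ => sum_comm).trans sum_comm

theorem sum_mul_prod_sub_mul_prod_eq_zero {ι κ α : Type*} [Fintype ι] {y : ι → κ → ℝ}
    {e : ι → ℝ} (h : ∀ m (k : Fin m → κ), ∑ i, e i * ∏ u, y i (k u) = 0)
    (b : α → κ) (c : α → ℝ) (T : Finset α) (m : ℕ) (k : Fin m → κ) :
    ∑ i, e i * ((∏ j ∈ T, (y i (b j) - c j)) * ∏ u, y i (k u)) = 0 := by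
  classical
  induction T using Finset.induction_on generalizing m k with
  | empty => simpa using h m k
  | insert j T hj ih =>
    have hcons := ih (m + 1) (Fin.cons (b j) k)
    simp only [Fin.prod_univ_succ, Fin.cons_zero, Fin.cons_succ] at hcons
    calc ∑ i, e i * ((∏ j' ∈ insert j T, (y i (b j') - c j')) * ∏ u, y i (k u))
        = ∑ i, e i * ((∏ j' ∈ T, (y i (b j') - c j')) * (y i (b j) * ∏ u, y i (k u)))
          - c j * ∑ i, e i * ((∏ j' ∈ T, (y i (b j') - c j')) * ∏ u, y i (k u)) := by
          rw [mul_sum, ← sum_sub_distrib]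
          exact sum_congr rfl fun i _ => by rw [prod_insert hj]; ring
      _ = 0 := by rw [hcons, ih m k, mul_zero, sub_zero]

theorem eq_zero_of_forall_sum_mul_prod_eq_zero {ι κ : Type*} [Fintype ι] {y : ι → κ → ℝ}
    (hy : Function.Injective y) {e : ι → ℝ}
    (h : ∀ m (k : Fin m → κ), ∑ i, e i * ∏ u, y i (k u) = 0) : e = 0 := by
  classical
  funext i₀
  have hsep : ∀ j : {j // j ≠ i₀}, ∃ a, y i₀ a ≠ y j a :=
    fun j => Function.ne_iff.mp fun hj => j.2 (hy hj).symm
  choose b hb using hsep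
  have hvanish := sum_mul_prod_sub_mul_prod_eq_zero h b (fun j => y j (b j)) univ 0 Fin.elim0
  rw [sum_eq_single i₀] at hvanish
  · have hP : ∏ j, (y i₀ (b j) - y j (b j)) ≠ 0 :=
      prod_ne_zero_iff.mpr fun j _ => sub_ne_zero.mpr (hb j)
    simpa [hP] using hvanish
  · intro i _ hi
    rw [prod_eq_zero (mem_univ (⟨i, hi⟩ : {j // j ≠ i₀})) (sub_self _), zero_mul, mul_zero]
  · exact fun h => absurd (mem_univ i₀) h

theorem exists_pos_sum_sum_mul_mul_dotProduct_pow {ι κ : Type*} [Fintype ι] [Fintype κ]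
    {y : ι → κ → ℝ} (hy : Function.Injective y) {e : ι → ℝ} (he : e ≠ 0) :
    ∃ m, 0 < ∑ i, ∑ j, e i * e j * (y i ⬝ᵥ y j) ^ m := by
  by_contra! hle
  refine he (eq_zero_of_forall_sum_mul_prod_eq_zero hy fun m k => ?_)
  have hsq := le_antisymm ((sum_sum_mul_mul_dotProduct_pow_eq_sum_sq y e m).symm ▸ hle m)
    (sum_nonneg fun _ _ => sq_nonneg _)
  exact pow_eq_zero_iff two_ne_zero |>.mp <|
    (sum_eq_zero_iff_of_nonneg fun _ _ => sq_nonneg _).mp hsq k (mem_univ k)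

theorem sum_sum_mul_mul_exp_pos {ι : Type*} [Fintype ι] (t : ι → ι → ℝ) (e : ι → ℝ)
    (hnonneg : ∀ m, 0 ≤ ∑ i, ∑ j, e i * e j * t i j ^ m)
    (hpos : ∃ m, 0 < ∑ i, ∑ j, e i * e j * t i j ^ m) :
    0 < ∑ i, ∑ j, e i * e j * exp (t i j) := by
  have hsum : HasSum (fun m : ℕ => (∑ i, ∑ j, e i * e j * t i j ^ m) / m.factorial)
      (∑ i, ∑ j, e i * e j * exp (t i j)) := by
    simp only [sum_div, mul_div_assoc]
    refine hasSum_sum fun i _ => hasSum_sum fun j _ => HasSum.mul_left _ ?_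
    rw [exp_eq_exp_ℝ]
    exact NormedSpace.expSeries_div_hasSum_exp (t i j)
  obtain ⟨m, hm⟩ := hpos
  exact hasSum_lt (fun m => div_nonneg (hnonneg m) m.factorial.cast_nonneg)
    (div_pos hm (by positivity)) hasSum_zero hsum

theorem sum_sum_mul_mul_exp_inner_pos {ι κ : Type*} [Fintype ι] [Fintype κ]
    {x : ι → EuclideanSpace ℝ κ} (hx : Function.Injective x) {e : ι → ℝ} (he : e ≠ 0) :
    0 < ∑ i, ∑ j, e i * e j * exp ⟪x i, x j⟫_ℝ := by
  have hinner : ∀ i j, ⟪x i, x j⟫_ℝ = (x i).ofLp ⬝ᵥ (x j).ofLp := fun i j => by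
    rw [EuclideanSpace.inner_eq_star_dotProduct, star_trivial, dotProduct_comm]
  simp only [hinner]
  have hy : Function.Injective fun i => (x i).ofLp := (WithLp.ofLp_injective 2).comp hx
  refine sum_sum_mul_mul_exp_pos _ e (fun m => ?_)
    (exists_pos_sum_sum_mul_mul_dotProduct_pow hy he)
  rw [sum_sum_mul_mul_dotProduct_pow_eq_sum_sq]
  exact sum_nonneg fun _ _ => sq_nonneg _

theorem sum_sum_mul_mul_exp_neg_norm_sub_sq_pos {ι κ : Type*} [Fintype ι] [Fintype κ]
    {x : ι → EuclideanSpace ℝ κ} (hx : Function.Injective x) {c : ι → ℝ} (hc : c ≠ 0) :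
    0 < ∑ i, ∑ j, c i * c j * exp (-‖x i - x j‖ ^ 2 / 2) := by
  have hfactor : ∀ i j, c i * c j * exp (-‖x i - x j‖ ^ 2 / 2)
      = (c i * exp (-‖x i‖ ^ 2 / 2)) * (c j * exp (-‖x j‖ ^ 2 / 2)) * exp ⟪x i, x j⟫_ℝ :=
    fun i j => by
      rw [mul_mul_mul_comm (c i), mul_assoc (c i * c j), ← exp_add, ← exp_add, norm_sub_sq_real]
      ring_nf
  have hcw : (fun i => c i * exp (-‖x i‖ ^ 2 / 2)) ≠ 0 := fun h =>
    hc <| funext fun i => (mul_eq_zero.mp (congrFun h i)).resolve_right (exp_pos _).ne'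
  simpa only [hfactor] using sum_sum_mul_mul_exp_inner_pos hx hcw

theorem Matrix.dotProduct_mulVec_eq_sum_sum {n R : Type*} [Fintype n] [CommSemiring R]
    (M : Matrix n n R) (v : n → R) : v ⬝ᵥ (M *ᵥ v) = ∑ i, ∑ j, v i * v j * M i j := by
  simp only [dotProduct, mulVec, mul_sum]
  exact sum_congr rfl fun i _ => sum_congr rfl fun j _ => by ring

theorem stmt_15_general {d n : ℕ} (A l : ℝ) (hA : 0 < A) (hl : 0 < l)
    (x : Fin n → EuclideanSpace ℝ (Fin d)) (hx : Function.Injective x)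
    (M : Matrix (Fin n) (Fin n) ℝ)
    (hM : ∀ i j, M i j = A * Real.exp (-‖x i - x j‖ ^ 2 / (2 * l ^ 2))) :
    M.PosDef ∧ ∀ c : Fin n → ℝ, c ≠ 0 → 0 < ∑ i, ∑ j, c i * c j * M i j := by
  have hscale : ∀ i j, M i j = A * exp (-‖l⁻¹ • x i - l⁻¹ • x j‖ ^ 2 / 2) := fun i j => by
    rw [hM, ← smul_sub, norm_smul, mul_pow, norm_inv, Real.norm_of_nonneg hl.le]
    field_simp
  have hx' : Function.Injective fun i => l⁻¹ • x i :=
    (smul_right_injective _ (inv_ne_zero hl.ne')).comp hx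
  have hquad : ∀ c : Fin n → ℝ, c ≠ 0 → 0 < ∑ i, ∑ j, c i * c j * M i j := fun c hc => by
    simp only [hscale, mul_left_comm _ A, ← mul_sum]
    exact mul_pos hA (sum_sum_mul_mul_exp_neg_norm_sub_sq_pos hx' hc)
  refine ⟨.of_dotProduct_mulVec_pos (IsHermitian.ext fun i j => ?_) fun v hv => ?_, hquad⟩
  · simp [hM, norm_sub_rev]
  · simpa only [star_trivial, dotProduct_mulVec_eq_sum_sum] using hquad v hv

/-- the squared exponential (Gaussian) kernel matrix
`M_{ij} = A exp(−‖x_i − x_j‖²/(2 l²))` at pairwise distinct points of `ℝ^d`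
is symmetric positive definite: `∑_{i,j} c_i c_j M_{ij} > 0` for every nonzero `c`. -/
theorem stmt_15 {d n : ℕ} (hd : 1 ≤ d) (A l : ℝ) (hA : 0 < A) (hl : 0 < l)
    (x : Fin n → EuclideanSpace ℝ (Fin d)) (hx : Function.Injective x)
    (M : Matrix (Fin n) (Fin n) ℝ)
    (hM : ∀ i j, M i j = A * Real.exp (-‖x i - x j‖ ^ 2 / (2 * l ^ 2))) :
    M.PosDef ∧ ∀ c : Fin n → ℝ, c ≠ 0 → 0 < ∑ i, ∑ j, c i * c j * M i j :=
  stmt_15_general A l hA hl x hx M hM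
end

section
/- Let H be a real separable Hilbert space and T : H → H a bounded self-adjoint linear operator with ⟨T x, x⟩ ≥ 0 for all x ∈ H. Suppose (e_i)_{i ∈ ℕ} is a Hilbert basis of H consisting of eigenvectors of T, T e_i = λ_i e_i, with nonnegative eigenvalues arranged in decreasing order: λ_0 ≥ λ_1 ≥ λ_2 ≥ … ≥ 0. Then for every r ∈ ℕ and every orthonormal family v_0, …, v_{r−1} in H, ∑_{i < r} ⟨T v_i, v_i⟩ ≤ ∑_{i < r} λ_i. Consequently, the span of the r dominant eigenvectors maximizes the captured variance ∑_{i<r} ⟨T v_i, v_i⟩ over all r-dimensional orthonormal families, i.e., the reference basis built from the dominant eigenmodes minimizes the mean representation error of the associated random field among r-term orthonormal expansions. -/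
/-!
Expanding in the eigenbasis `b`, `∑ i, ⟪T v_i, v_i⟫ = ∑ j, λ_j s_j` with weights
`s_j = ∑ i, ⟪v_i, b_j⟫²`. Bessel's inequality gives `0 ≤ s_j ≤ 1` and Parseval gives
`∑ j, s_j = r`. Among such weights, a decreasing sequence `λ` is maximised by putting
weight `1` on the first `r` indices: `(λ_j - λ_r) (s_j - 1_{j<r}) ≤ 0` termwise, and summing
this over `j` is the claim.
-/

open scoped RealInnerProductSpace

theorem hasSum_mul_le_sum_range_of_antitone {lam s : ℕ → ℝ} (hlam : Antitone lam)
    (hs0 : ∀ j, 0 ≤ s j) (hs1 : ∀ j, s j ≤ 1) {r : ℕ} (hs : HasSum s r) {a : ℝ}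
    (ha : HasSum (fun j => lam j * s j) a) : a ≤ ∑ j ∈ Finset.range r, lam j := by
  set ind : ℕ → ℝ := fun j => if j < r then 1 else 0
  have hind_zero : ∀ j ∉ Finset.range r, ind j = 0 := fun j hj => by
    simpa [ind, Finset.mem_range] using hj
  have hind : HasSum ind r := by
    have h : HasSum ind _ := hasSum_sum_of_ne_finset_zero hind_zero
    simpa [ind, Finset.filter_true_of_mem fun j hj => Finset.mem_range.mp hj] using h
  have hlam_ind : HasSum (fun j => lam j * ind j) (∑ j ∈ Finset.range r, lam j) := by
    have h : HasSum (fun j => lam j * ind j) (∑ j ∈ Finset.range r, lam j * ind j) :=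
      hasSum_sum_of_ne_finset_zero fun j hj => by simp [hind_zero j hj]
    have hsum : ∑ j ∈ Finset.range r, lam j * ind j = ∑ j ∈ Finset.range r, lam j :=
      Finset.sum_congr rfl fun j hj => by simp [ind, Finset.mem_range.mp hj]
    rwa [hsum] at h
  have hdiff : HasSum (fun j => (lam j - lam r) * (s j - ind j))
      (a - ∑ j ∈ Finset.range r, lam j - lam r * r + lam r * r) :=
    (((ha.sub hlam_ind).sub (hs.mul_left (lam r))).add (hind.mul_left (lam r))).congr_fun
      fun j => by ring
  have hterm : ∀ j, (lam j - lam r) * (s j - ind j) ≤ 0 := fun j => by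
    by_cases hj : j < r
    · simp only [ind, if_pos hj]
      exact mul_nonpos_of_nonneg_of_nonpos (sub_nonneg.2 (hlam hj.le)) (by linarith [hs1 j])
    · simp only [ind, if_neg hj, sub_zero]
      exact mul_nonpos_of_nonpos_of_nonneg (sub_nonpos.2 (hlam (not_lt.1 hj))) (hs0 j)
  linarith [hasSum_le hterm hdiff hasSum_zero]

section HilbertBasis

variable {ι H : Type*} [NormedAddCommGroup H] [InnerProductSpace ℝ H]

theorem HilbertBasis.hasSum_inner_sq (b : HilbertBasis ι ℝ H) (x : H) :
    HasSum (fun i => ⟪x, b i⟫ ^ 2) (‖x‖ ^ 2) := by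
  rw [← real_inner_self_eq_norm_sq]
  exact (b.hasSum_inner_mul_inner x x).congr_fun fun i => by rw [real_inner_comm x, sq]

theorem HilbertBasis.hasSum_eigenvalue_mul_inner_sq (b : HilbertBasis ι ℝ H)
    {T : H →ₗ[ℝ] H} (hT : T.IsSymmetric) {lam : ι → ℝ} (heig : ∀ i, T (b i) = lam i • b i)
    (x : H) : HasSum (fun i => lam i * ⟪x, b i⟫ ^ 2) ⟪T x, x⟫ :=
  (b.hasSum_inner_mul_inner (T x) x).congr_fun fun i => by
    rw [hT, heig, real_inner_smul_right, real_inner_comm x]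
    ring

theorem Orthonormal.sum_inner_sq_le [Fintype ι] {v : ι → H} (hv : Orthonormal ℝ v) (x : H) :
    ∑ i, ⟪v i, x⟫ ^ 2 ≤ ‖x‖ ^ 2 := by
  simpa only [Real.norm_eq_abs, sq_abs] using hv.sum_inner_products_le x (s := Finset.univ)

end HilbertBasis

theorem stmt_16_general {H : Type*} [NormedAddCommGroup H] [InnerProductSpace ℝ H]
    (T : H →L[ℝ] H) (hsa : ∀ x y : H, ⟪T x, y⟫ = ⟪x, T y⟫)
    (b : HilbertBasis ℕ ℝ H) (lam : ℕ → ℝ)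
    (heig : ∀ i, T (b i) = lam i • b i)
    (hdec : Antitone lam)
    (r : ℕ) (v : Fin r → H) (hv : Orthonormal ℝ v) :
    ∑ i, ⟪T (v i), v i⟫ ≤ ∑ i ∈ Finset.range r, lam i := by
  set s : ℕ → ℝ := fun j => ∑ i, ⟪v i, b j⟫ ^ 2
  have hcaptured : HasSum (fun j => lam j * s j) (∑ i, ⟪T (v i), v i⟫) := by
    simpa only [s, Finset.mul_sum, ContinuousLinearMap.coe_coe] using
      hasSum_sum fun i _ => b.hasSum_eigenvalue_mul_inner_sq (T := T) hsa heig (v i)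
  have htotal : HasSum s r := by
    simpa [s, hv.1] using hasSum_sum fun i (_ : i ∈ Finset.univ) => b.hasSum_inner_sq (v i)
  refine hasSum_mul_le_sum_range_of_antitone hdec (fun j => ?_) (fun j => ?_) htotal hcaptured
  · positivity
  · simpa [b.orthonormal.1 j] using hv.sum_inner_sq_le (b j)

/-- for a bounded nonnegative self-adjoint operator `T` diagonalized by a
Hilbert basis with nonnegative eigenvalues in decreasing order, any orthonormal family
`v_0, …, v_{r−1}` captures at most the variance of the `r` dominant eigenmodes:
`∑_{i<r} ⟨T v_i, v_i⟩ ≤ ∑_{i<r} λ_i`. -/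
theorem stmt_16 {H : Type*} [NormedAddCommGroup H] [InnerProductSpace ℝ H]
    [CompleteSpace H]
    (T : H →L[ℝ] H) (hsa : ∀ x y : H, ⟪T x, y⟫ = ⟪x, T y⟫)
    (hnn : ∀ x : H, 0 ≤ ⟪T x, x⟫)
    (b : HilbertBasis ℕ ℝ H) (lam : ℕ → ℝ)
    (heig : ∀ i, T (b i) = lam i • b i)
    (hdec : Antitone lam) (hpos : ∀ i, 0 ≤ lam i)
    (r : ℕ) (v : Fin r → H) (hv : Orthonormal ℝ v) :
    ∑ i, ⟪T (v i), v i⟫ ≤ ∑ i ∈ Finset.range r, lam i :=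
  stmt_16_general T hsa b lam heig hdec r v hv
end
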